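/- arXiv:0912.3569 — 3 statements merged into one kernel-verified Lean document; each statement's English description precedes it below -/
import Mathlib

section
/- Let A = k{V, I} and A^! = k{V^*, I^⊥} be dual quadratic algebras over a field k, where V is finite-dimensional. The special element e_A ∈ A^! ⊗ A, defined as the image of the identity of Hom(V,V) under the canonical isomorphism Hom(V,V) ≅ V^* ⊗ V followed by the quotient maps, satisfies e_A² = 0. -/
/-! Both tensor factors of `e_A²` are quadratic: `e_A² = Σᵢⱼ v̄ᵢv̄ⱼ ⊗ vᵢvⱼ` is the image of the
canonical element `Σ_q w̄_q ⊗ w_q` of `(V ⊗ V)^* ⊗ (V ⊗ V)`, `w` running over the basis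
`{vᵢ ⊗ vⱼ}`. The map `V ⊗ V → A` kills `I`, so it factors through `π : V ⊗ V → (V ⊗ V)/I`, and
the canonical element is basis independent: for any basis `c` of the quotient,
`Σ_q w̄_q ⊗ π w_q = Σ_p (c̄_p ∘ π) ⊗ c_p`. Now every `c̄_p ∘ π` annihilates `I`, so under
`(V ⊗ V)^* ≅ V^* ⊗ V^*` it lies in `I^⊥` and vanishes in `A^!`. -/

open TensorProduct

noncomputable section

variable (k : Type*) [Field k] (V : Type*) [AddCommGroup V] [Module k V]

/-- The canonical inclusion `V ⊗ V → T(V)` of the degree two component into the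
tensor algebra. -/
def iota2 : V ⊗[k] V →ₗ[k] TensorAlgebra k V :=
  (LinearMap.mul' k (TensorAlgebra k V)) ∘ₗ
    (TensorProduct.map (TensorAlgebra.ι k) (TensorAlgebra.ι k))

/-- The relation on `T(V)` identifying the elements of `I ⊆ V ⊗ V` with `0`. -/
def quadRel (I : Submodule k (V ⊗[k] V)) (a b : TensorAlgebra k V) : Prop :=
  b = 0 ∧ a ∈ iota2 k V '' (I : Set (V ⊗[k] V))

/-- The quadratic algebra `k{V, I} = T(V)/⟨I⟩`. -/
def QuadAlgebra (I : Submodule k (V ⊗[k] V)) : Type _ := RingQuot (quadRel k V I)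

instance (I : Submodule k (V ⊗[k] V)) : Ring (QuadAlgebra k V I) :=
  inferInstanceAs (Ring (RingQuot (quadRel k V I)))
instance (I : Submodule k (V ⊗[k] V)) : Algebra k (QuadAlgebra k V I) :=
  inferInstanceAs (Algebra k (RingQuot (quadRel k V I)))

/-- The canonical quotient map `T(V) → k{V, I}`. -/
def quadMk (I : Submodule k (V ⊗[k] V)) : TensorAlgebra k V →ₐ[k] QuadAlgebra k V I :=
  RingQuot.mkAlgHom k (quadRel k V I)

/-- The annihilator `I^⊥ ⊆ V^* ⊗ V^*` of a subspace `I ⊆ V ⊗ V`: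
`I^⊥ = {α | α(w) = 0 for all w ∈ I}`, where `α` is viewed as a functional on `V ⊗ V` via the
canonical map `V^* ⊗ V^* → (V ⊗ V)^*`. -/
def perp (I : Submodule k (V ⊗[k] V)) :
    Submodule k (Module.Dual k V ⊗[k] Module.Dual k V) :=
  LinearMap.ker
    (((LinearMap.llcomp k (↥I) (V ⊗[k] V) k).flip I.subtype) ∘ₗ TensorProduct.dualDistrib k V V)


lemma quadMk_ι_mul_ι (I : Submodule k (V ⊗[k] V)) (x y : V) :
    quadMk k V I (TensorAlgebra.ι k x) * quadMk k V I (TensorAlgebra.ι k y)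
      = quadMk k V I (iota2 k V (x ⊗ₜ y)) := by
  simp [iota2]

lemma quadMk_iota2_eq_zero (I : Submodule k (V ⊗[k] V)) {x : V ⊗[k] V} (hx : x ∈ I) :
    quadMk k V I (iota2 k V x) = 0 :=
  (RingQuot.mkAlgHom_rel k (show quadRel k V I (iota2 k V x) 0 from ⟨rfl, x, hx, rfl⟩)).trans
    (map_zero _)

lemma mem_perp_iff (I : Submodule k (V ⊗[k] V)) (α : Module.Dual k V ⊗[k] Module.Dual k V) :
    α ∈ perp k V I ↔ ∀ w ∈ I, TensorProduct.dualDistrib k V V α w = 0 := by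
  simp [perp, LinearMap.ext_iff]

lemma dualDistribEquivOfBasis_symm_dualBasis {ι : Type*} [Fintype ι] [DecidableEq ι]
    (B : Module.Basis ι k V) (i j : ι) :
    (TensorProduct.dualDistribEquivOfBasis B B).symm ((B.tensorProduct B).dualBasis (i, j))
      = B.dualBasis i ⊗ₜ B.dualBasis j := by
  rw [LinearEquiv.symm_apply_eq]
  change _ = TensorProduct.dualDistrib k V V _
  refine (B.tensorProduct B).ext fun ⟨i', j'⟩ => ?_
  by_cases hi : i' = i <;> by_cases hj : j' = j <;>
    simp [TensorProduct.dualDistrib_apply, hi, hj]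

lemma sum_tmul_sq {R A C ι : Type*} [CommSemiring R] [Semiring A] [Algebra R A] [Semiring C]
    [Algebra R C] (s : Finset ι) (a : ι → A) (c : ι → C) :
    (∑ i ∈ s, a i ⊗ₜ[R] c i) ^ 2 = ∑ i ∈ s, ∑ j ∈ s, (a i * a j) ⊗ₜ[R] (c i * c j) := by
  simp only [sq, Finset.sum_mul_sum, Algebra.TensorProduct.tmul_mul_tmul]

section CanonicalElement

open Module

variable {W : Type*} [AddCommGroup W]

lemma sum_dualBasis_tmul_map_eq {R U κ μ : Type*} [CommRing R] [Module R W] [AddCommGroup U]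
    [Module R U] [Fintype κ] [DecidableEq κ] [Fintype μ] [DecidableEq μ] (b : Basis κ R W)
    (c : Basis μ R U) (π : W →ₗ[R] U) :
    ∑ q, b.dualBasis q ⊗ₜ[R] π (b q) = ∑ p, (c.dualBasis p ∘ₗ π) ⊗ₜ[R] c p := by
  apply (dualTensorHomEquivOfBasis (N := U) b).injective
  ext w
  simp only [dualTensorHomEquivOfBasis_apply, map_sum, LinearMap.sum_apply, dualTensorHom_apply,
    LinearMap.comp_apply, Basis.coe_dualBasis, Basis.coord_apply, Basis.sum_repr]
  simp only [← map_smul, ← map_sum, Basis.sum_repr]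

lemma sum_map_dualBasis_tmul_eq_zero {K M N κ : Type*} [Field K] [Module K W] [AddCommGroup M]
    [Module K M] [AddCommGroup N] [Module K N] [Fintype κ] [DecidableEq κ] (b : Basis κ K W)
    (I : Submodule K W) (f : Dual K W →ₗ[K] M) (g : W →ₗ[K] N)
    (hf : ∀ φ ∈ I.dualAnnihilator, f φ = 0) (hg : ∀ w ∈ I, g w = 0) :
    ∑ q, f (b.dualBasis q) ⊗ₜ[K] g (b q) = 0 := by
  have := Module.Finite.of_basis b
  let c := Module.finBasis K (W ⧸ I)
  have hann : ∀ p, c.dualBasis p ∘ₗ I.mkQ ∈ I.dualAnnihilator := fun p =>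
    (Submodule.mem_dualAnnihilator _).2 fun w hw => by
      rw [LinearMap.comp_apply, Submodule.mkQ_apply, (Submodule.Quotient.mk_eq_zero I).2 hw,
        map_zero]
  have hfactor := congrArg (TensorProduct.map f (I.liftQ g hg))
    (sum_dualBasis_tmul_map_eq b c I.mkQ)
  simp only [map_sum, map_tmul, Submodule.mkQ_apply, hf _ (hann _),
    zero_tmul, Finset.sum_const_zero] at hfactor
  exact hfactor

end CanonicalElement

/-- Let `A = k{V, I}` and `A^! = k{V^*, I^⊥}` be dual quadratic algebras,
`V` finite dimensional with basis `{vᵢ}` and dual basis `{v̄ᵢ}`.  Then the element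
`e_A = Σᵢ v̄ᵢ ⊗ vᵢ` of `A^! ⊗ A` (the image of `id ∈ Hom(V,V) ≅ V^* ⊗ V` under the quotient
maps) satisfies `e_A² = 0`. -/
theorem eA_squared_eq_zero
    (ι : Type*) [Fintype ι] [DecidableEq ι] (B : Module.Basis ι k V)
    (I : Submodule k (V ⊗[k] V)) :
    (∑ i : ι,
        (quadMk k (Module.Dual k V) (perp k V I) (TensorAlgebra.ι k (B.dualBasis i))) ⊗ₜ[k]
          (quadMk k V I (TensorAlgebra.ι k (B i))) :
      QuadAlgebra k (Module.Dual k V) (perp k V I) ⊗[k] QuadAlgebra k V I) ^ 2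
      = 0 := by
  let ψ := TensorProduct.dualDistribEquivOfBasis B B
  let Φ₁ := (quadMk k (Module.Dual k V) (perp k V I)).toLinearMap ∘ₗ iota2 k (Module.Dual k V)
  let Φ₂ := (quadMk k V I).toLinearMap ∘ₗ iota2 k V
  have hΦ₁ : ∀ φ ∈ I.dualAnnihilator, Φ₁ (ψ.symm φ) = 0 := fun φ hφ =>
    quadMk_iota2_eq_zero k (Module.Dual k V) (perp k V I) <| (mem_perp_iff k V I _).2 <| by
      change ∀ w ∈ I, ψ (ψ.symm φ) w = 0
      simpa only [LinearEquiv.apply_symm_apply] using (Submodule.mem_dualAnnihilator φ).1 hφ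
  have hΦ₂ : ∀ w ∈ I, Φ₂ w = 0 := fun w hw => quadMk_iota2_eq_zero k V I hw
  have hcan := sum_map_dualBasis_tmul_eq_zero (B.tensorProduct B) I (Φ₁ ∘ₗ ψ.symm.toLinearMap) Φ₂
    hΦ₁ hΦ₂
  simp only [Fintype.sum_prod_type, LinearMap.comp_apply, LinearEquiv.coe_coe, ψ,
    dualDistribEquivOfBasis_symm_dualBasis, Module.Basis.tensorProduct_apply] at hcan
  simp only [sum_tmul_sq, quadMk_ι_mul_ι]
  exact hcan

end
end

section
/- Let R be a ring and E a left R-module admitting a finite free resolution 0 → F_n → ⋯ → F_1 → F_0 → E → 0 by finitely generated free modules. If E is projective, then E is stably free, i.e., there exists a finitely generated free module F such that E ⊕ F is free of finite rank. -/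
/-!
A surjection onto a projective module splits, so in `0 → K → R^a → E → 0` with `E` projective,
`K` is projective and `K ⊕ E ≅ R^a`; if moreover `K ⊕ R^m ≅ R^p`, then
`E ⊕ R^p ≅ E ⊕ K ⊕ R^m ≅ R^(a + m)`. Walking up the resolution, every image `im d_i` is projective,
and the images are stably free by induction on the length, starting from `im d_n = 0`.
-/

open LinearMap

/-- Unlike `Module.IsStablyFree`, this asks for `E ⊕ R^m ≅ R^p` with finite `p`. -/
def IsStablyFinFree (R E : Type*) [Ring R] [AddCommGroup E] [Module R E] : Prop :=
  ∃ m p : ℕ, Nonempty ((E × (Fin m → R)) ≃ₗ[R] (Fin p → R))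

def prodFinArrowLinearEquiv (R : Type*) [Semiring R] (a b : ℕ) :
    ((Fin a → R) × (Fin b → R)) ≃ₗ[R] (Fin (a + b) → R) :=
  (LinearEquiv.sumArrowLequivProdArrow (Fin a) (Fin b) R R).symm ≪≫ₗ
    (LinearEquiv.funCongrLeft R R finSumFinEquiv).symm

section Splitting

variable {R F E : Type*} [Ring R] [AddCommGroup F] [Module R F] [AddCommGroup E] [Module R E]
  [Module.Projective R E]

theorem exists_linearEquiv_ker_prod_of_surjective (ε : F →ₗ[R] E)
    (hε : Function.Surjective ε) :
    ∃ e : F ≃ₗ[R] (ker ε × E), (ker ε).subtype = e.symm ∘ₗ inl R _ E := by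
  obtain ⟨s, hs⟩ := ε.exists_rightInverse_of_surjective (range_eq_top.2 hε)
  exact ⟨_, ((exact_subtype_ker_map ε).splitSurjectiveEquiv
    (ker ε).injective_subtype ⟨s, hs⟩).2.1⟩

theorem projective_ker_of_surjective [Module.Projective R F] (ε : F →ₗ[R] E)
    (hε : Function.Surjective ε) : Module.Projective R (ker ε) := by
  obtain ⟨e, he⟩ := exists_linearEquiv_ker_prod_of_surjective ε hε
  refine .of_split (ker ε).subtype (fst R _ E ∘ₗ e.toLinearMap) ?_
  rw [he]; ext x; simp

end Splitting

namespace IsStablyFinFree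

variable {R E K : Type*} [Ring R] [AddCommGroup E] [Module R E] [AddCommGroup K] [Module R K]

theorem of_subsingleton [Subsingleton E] : IsStablyFinFree R E :=
  ⟨0, 0, ⟨LinearEquiv.ofSubsingleton _ _⟩⟩

theorem of_prod_linearEquiv {a : ℕ} (e : (K × E) ≃ₗ[R] (Fin a → R)) (hK : IsStablyFinFree R K) :
    IsStablyFinFree R E := by
  obtain ⟨m, p, ⟨eK⟩⟩ := hK
  refine ⟨p, a + m, ⟨?_⟩⟩
  exact (LinearEquiv.prodCongr (.refl R E) eK.symm) ≪≫ₗ (LinearEquiv.prodAssoc R E K _).symm ≪≫ₗ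
    (LinearEquiv.prodCongr (LinearEquiv.prodComm R E K ≪≫ₗ e) (.refl R _)) ≪≫ₗ
    prodFinArrowLinearEquiv R a m

theorem of_surjective [Module.Projective R E] {a : ℕ} (ε : (Fin a → R) →ₗ[R] E)
    (hε : Function.Surjective ε) (hK : IsStablyFinFree R (ker ε)) : IsStablyFinFree R E :=
  have ⟨e, _⟩ := exists_linearEquiv_ker_prod_of_surjective ε hε
  of_prod_linearEquiv e.symm hK

end IsStablyFinFree

theorem isStablyFinFree_range_of_exact {R : Type*} [Ring R] (n : ℕ) (r : ℕ → ℕ)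
    (d : (i : ℕ) → (Fin (r (i + 1)) → R) →ₗ[R] (Fin (r i) → R)) (hfin : ∀ i, n < i → r i = 0)
    (hexact : ∀ i, ker (d i) = range (d (i + 1))) [Module.Projective R (range (d 0))] :
    IsStablyFinFree R (range (d 0)) := by
  induction n generalizing r with
  | zero =>
    have : Subsingleton (Fin (r 1) → R) := by rw [hfin 1 one_pos]; infer_instance
    rw [range_eq_bot.2 (Subsingleton.elim _ _)]
    exact .of_subsingleton
  | succ n ih =>
    have hker : ker (d 0).rangeRestrict = range (d 1) := by rw [ker_rangeRestrict, hexact 0]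
    have : Module.Projective R (range (d 1)) :=
      hker ▸ projective_ker_of_surjective _ (d 0).surjective_rangeRestrict
    refine .of_surjective _ (d 0).surjective_rangeRestrict ?_
    rw [hker]
    exact ih (fun i ↦ r (i + 1)) (fun i ↦ d (i + 1)) (fun i hi ↦ hfin (i + 1) (by omega))
      (fun i ↦ hexact (i + 1))

/-- Let `R` be a ring and `E` a left `R`-module admitting a finite free
resolution `0 → F_n → ⋯ → F_1 → F_0 → E → 0` by finitely generated free modules (encoded by
ranks `r i`, vanishing for `i > n`, differentials `d i` and augmentation `ε`, with exactness
everywhere).  If `E` is projective then `E` is stably free: `E ⊕ R^m ≅ R^p` for some `m, p`. -/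
theorem projective_of_finite_free_resolution_is_stably_free
    (R E : Type*) [Ring R] [AddCommGroup E] [Module R E]
    (n : ℕ) (r : ℕ → ℕ) (hfin : ∀ i, n < i → r i = 0)
    (d : (i : ℕ) → ((Fin (r (i + 1)) → R) →ₗ[R] (Fin (r i) → R)))
    (ε : (Fin (r 0) → R) →ₗ[R] E)
    (hsurj : Function.Surjective ε)
    (hexact0 : LinearMap.ker ε = LinearMap.range (d 0))
    (hexact : ∀ i, LinearMap.ker (d i) = LinearMap.range (d (i + 1)))
    (hproj : Module.Projective R E) :
    ∃ m p : ℕ, Nonempty ((E × (Fin m → R)) ≃ₗ[R] (Fin p → R)) := by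
  have : Module.Projective R (range (d 0)) :=
    hexact0 ▸ projective_ker_of_surjective ε hsurj
  refine IsStablyFinFree.of_surjective ε hsurj ?_
  rw [hexact0]
  exact isStablyFinFree_range_of_exact n r d hfin hexact
end

section
/- Let A be an associative k-algebra generated by elements u₁,…,u_N such that for all i < j, u_j u_i = q_{ij} u_i u_j + Σ_{s<i} Σ_t (α_{ij}^{st} u_s u_t + β_{ij}^{st} u_t u_s) for some nonzero scalars q_{ij} and scalars α_{ij}^{st}, β_{ij}^{st}. Then A is left and right Noetherian. -/
/-!
Order exponent vectors `a : Fin N → ℕ` by `weight` and filter `A` by the `k`-spans of the ordered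
monomials `u 0 ^ a 0 * ⋯ * u (N-1) ^ a (N-1)` of weight at most (`spanLE`), resp. less than
(`spanLT`), a given one; the ordered monomials need not be linearly independent.
Sorting a word by swapping adjacent descents, the relations show that every word is a nonzero
multiple of the ordered monomial with the same exponent, modulo lower terms; the swap either keeps
the exponent and lowers `suffixWeight`, or produces words of smaller weight.
Consequently the exponents of the leading terms of a left ideal form an ideal of the monoid `ℕ^N`,
and a left ideal contained in another one with the same leading exponents equals it. By Dickson's
lemma the monoid ideals of `ℕ^N` satisfy the ascending chain condition, hence so do the left ideals
of `A`. The relations survive the passage to `Aᵐᵒᵖ` (with `c` replaced by `c⁻¹`), which gives the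
right Noetherian property.
-/

open Finset

theorem Submodule.eq_zero_or_mem_span_image_le {ι κ R M : Type*} [Semiring R] [AddCommMonoid M]
    [Module R M] [LinearOrder κ] (key : ι → κ) {f : ι → M} {s : Set ι} {x : M}
    (hx : x ∈ span R (f '' s)) :
    x = 0 ∨ ∃ a ∈ s, x ∈ span R (f '' {c | key c ≤ key a}) := by
  obtain ⟨l, hl, rfl⟩ := (Finsupp.mem_span_image_iff_linearCombination R).1 hx
  rcases l.support.eq_empty_or_nonempty with h | h
  · rw [Finsupp.support_eq_empty.1 h, map_zero]
    exact .inl rfl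
  · obtain ⟨a, ha, hmax⟩ := l.support.exists_max_image key h
    exact .inr ⟨a, hl ha, (Finsupp.mem_span_image_iff_linearCombination R).2 ⟨l, hmax, rfl⟩⟩

theorem Algebra.adjoin_range_op_eq_top {ι k A : Type*} [CommRing k] [Ring A] [Algebra k A]
    {u : ι → A} (hgen : Algebra.adjoin k (Set.range u) = ⊤) :
    Algebra.adjoin k (Set.range fun i => MulOpposite.op (u i)) = ⊤ := by
  have hrange : Set.range (fun i => MulOpposite.op (u i)) = MulOpposite.unop ⁻¹' Set.range u := by
    ext x
    exact ⟨fun ⟨i, hi⟩ => ⟨i, by rw [← hi]; rfl⟩, fun ⟨i, hi⟩ => ⟨i, by simp [hi]⟩⟩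
  rw [hrange, ← Subalgebra.op_adjoin, hgen, Subalgebra.op_top]

namespace SkewPBW

variable {N : ℕ}

def tailSums (a : Fin N → ℕ) (m : Fin N) : ℕ := ∑ i ∈ Ici m, a i

/-- Tail sums compared lexicographically: first the degree, then, among monomials of equal degree,
more weight on small indices makes a monomial smaller. In this order every correction term
`u s * u t`, `u t * u s` (`s < i < j`) of `u j * u i` lies strictly below `u i * u j`. -/
def weight (a : Fin N → ℕ) : Lex (Fin N → ℕ) := toLex (tailSums a)

lemma tailSums_add (a b : Fin N → ℕ) : tailSums (a + b) = tailSums a + tailSums b := by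
  funext m
  simp [tailSums, sum_add_distrib]

lemma weight_add (a b : Fin N → ℕ) : weight (a + b) = weight a + weight b := by
  rw [weight, tailSums_add, toLex_add]
  rfl

lemma weight_injective : Function.Injective (weight (N := N)) := by
  intro a b h
  replace h : tailSums a = tailSums b := toLex.injective h
  funext m
  induction m using WellFoundedGT.induction with
  | _ m ih =>
    have split (x : Fin N → ℕ) : tailSums x m = x m + ∑ i ∈ Ioi m, x i := by
      rw [tailSums, ← Ioi_insert, sum_insert (by simp)]
    have hm := congrFun h m
    have htail : ∑ i ∈ Ioi m, a i = ∑ i ∈ Ioi m, b i :=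
      sum_congr rfl fun i hi => ih i (mem_Ioi.1 hi)
    rw [split, split] at hm
    omega

lemma tailSums_single (x m : Fin N) : tailSums (Pi.single x 1) m = if m ≤ x then 1 else 0 := by
  simp [tailSums, sum_pi_single']

lemma weight_single_add_single_lt {s t i j : Fin N} (hsi : s < i) (hij : i < j) :
    weight (Pi.single s 1 + Pi.single t 1) < weight (Pi.single i 1 + Pi.single j 1) := by
  have hp : min (s : ℕ) t + 1 < N := by omega
  refine ⟨⟨min (s : ℕ) t + 1, hp⟩, fun m hm => ?_, ?_⟩ <;>
  · simp only [weight, Pi.toLex_apply, tailSums_add, Pi.add_apply, tailSums_single, Fin.le_def,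
      Fin.lt_def] at *
    split_ifs <;> omega

def wordExp (l : List (Fin N)) (i : Fin N) : ℕ := l.count i

lemma wordExp_append (l₁ l₂ : List (Fin N)) : wordExp (l₁ ++ l₂) = wordExp l₁ + wordExp l₂ := by
  funext i
  simp [wordExp]

lemma wordExp_cons (x : Fin N) (l : List (Fin N)) :
    wordExp (x :: l) = Pi.single x 1 + wordExp l := by
  funext i
  by_cases h : i = x
  · subst h
    simp [wordExp, add_comm]
  · simp [wordExp, h, Ne.symm h]

lemma wordExp_perm {l l' : List (Fin N)} (h : l.Perm l') : wordExp l = wordExp l' :=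
  funext fun i => h.count_eq i

lemma wordExp_append_cons_cons (l₁ l₂ : List (Fin N)) (x y : Fin N) :
    wordExp (l₁ ++ x :: y :: l₂) = wordExp (l₁ ++ l₂) + (Pi.single x 1 + Pi.single y 1) := by
  simp only [wordExp_append, wordExp_cons]
  abel

lemma weight_wordExp_lt {s t i j : Fin N} (hsi : s < i) (hij : i < j) (l₁ l₂ : List (Fin N)) :
    weight (wordExp (l₁ ++ s :: t :: l₂)) < weight (wordExp (l₁ ++ j :: i :: l₂)) := by
  rw [wordExp_append_cons_cons, wordExp_append_cons_cons, weight_add (wordExp _),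
    weight_add (wordExp _), add_comm (Pi.single j 1)]
  exact add_lt_add_right (weight_single_add_single_lt hsi hij) _

def suffixWeight : List (Fin N) → ℕ
  | [] => 0
  | x :: xs => x * (xs.length + 1) + suffixWeight xs

lemma suffixWeight_append (l₁ l₂ : List (Fin N)) :
    suffixWeight (l₁ ++ l₂) =
      suffixWeight l₁ + (l₁.map Fin.val).sum * l₂.length + suffixWeight l₂ := by
  induction l₁ with
  | nil => simp [suffixWeight]
  | cons x xs ih =>
    simp only [List.cons_append, suffixWeight, List.length_append, List.map_cons, List.sum_cons, ih]
    ring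

lemma suffixWeight_swap_lt {i j : Fin N} (hij : i < j) (l₁ l₂ : List (Fin N)) :
    suffixWeight (l₁ ++ i :: j :: l₂) < suffixWeight (l₁ ++ j :: i :: l₂) := by
  simp only [suffixWeight_append, suffixWeight, List.length_cons]
  rw [Fin.lt_def] at hij
  nlinarith

lemma exists_eq_append_descent {l : List (Fin N)} (h : ¬ l.IsChain (· ≤ ·)) :
    ∃ l₁ j i l₂, i < j ∧ l = l₁ ++ j :: i :: l₂ := by
  induction l with
  | nil => exact absurd .nil h
  | cons x xs ih =>
    rcases xs with _ | ⟨y, t⟩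
    · exact absurd (.singleton x) h
    rw [List.isChain_cons_cons, not_and_or, not_le] at h
    rcases h with hxy | ht
    · exact ⟨[], x, y, t, hxy, rfl⟩
    · obtain ⟨l₁, j, i, l₂, hij, hl⟩ := ih ht
      exact ⟨x :: l₁, j, i, l₂, hij, by rw [hl, List.cons_append]⟩

def sortedWord (a : Fin N → ℕ) : List (Fin N) :=
  (List.finRange N).flatMap fun i => List.replicate (a i) i

lemma wordExp_sortedWord (a : Fin N → ℕ) : wordExp (sortedWord a) = a := by
  funext z
  simp [wordExp, sortedWord, List.count_flatMap, List.count_replicate, Function.comp_def,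
    ← Fin.sum_univ_def]

lemma pairwise_sortedWord (a : Fin N → ℕ) : (sortedWord a).Pairwise (· ≤ ·) := by
  rw [sortedWord, List.pairwise_flatMap]
  refine ⟨fun i _ => List.pairwise_replicate.2 (.inr le_rfl), ?_⟩
  refine (List.pairwise_lt_finRange N).imp fun hij x hx y hy => ?_
  rw [List.eq_of_mem_replicate hx, List.eq_of_mem_replicate hy]
  exact hij.le

lemma eq_sortedWord_of_isChain {l : List (Fin N)} (h : l.IsChain (· ≤ ·)) :
    l = sortedWord (wordExp l) :=
  List.Perm.eq_of_pairwise' (List.isChain_iff_pairwise.1 h) (pairwise_sortedWord _) <|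
    List.perm_iff_count.2 fun z => congrFun (wordExp_sortedWord (wordExp l)).symm z

section Filtration

variable (k : Type*) {A : Type*} [CommRing k] [Ring A] [Algebra k A] (u : Fin N → A)

def wordProd (l : List (Fin N)) : A := (l.map u).prod

def mon (a : Fin N → ℕ) : A := wordProd u (sortedWord a)

def spanLE (a : Fin N → ℕ) : Submodule k A := Submodule.span k (mon u '' {c | weight c ≤ weight a})

def spanLT (a : Fin N → ℕ) : Submodule k A := Submodule.span k (mon u '' {c | weight c < weight a})

variable {k u}

lemma wordProd_append (l₁ l₂ : List (Fin N)) :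
    wordProd u (l₁ ++ l₂) = wordProd u l₁ * wordProd u l₂ := by
  simp [wordProd]

lemma wordProd_append_cons_cons (l₁ l₂ : List (Fin N)) (x y : Fin N) :
    wordProd u (l₁ ++ x :: y :: l₂) = wordProd u l₁ * (u x * u y) * wordProd u l₂ := by
  simp [wordProd, mul_assoc]

lemma wordProd_eq_mon_of_isChain {l : List (Fin N)} (h : l.IsChain (· ≤ ·)) :
    wordProd u l = mon u (wordExp l) := by
  rw [mon, ← eq_sortedWord_of_isChain h]

lemma spanLE_le_spanLT {a b : Fin N → ℕ} (h : weight a < weight b) : spanLE k u a ≤ spanLT k u b :=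
  Submodule.span_mono <| Set.image_mono fun _ hc => lt_of_le_of_lt hc h

lemma mem_spanLE_iff {x : A} {a : Fin N → ℕ} :
    x ∈ spanLE k u a ↔ ∃ c : k, x - c • mon u a ∈ spanLT k u a := by
  have hset : {c | weight c ≤ weight a} = insert a {c | weight c < weight a} := by
    ext c
    simp only [Set.mem_insert_iff, Set.mem_ofPred_eq, le_iff_eq_or_lt, weight_injective.eq_iff]
    rfl
  rw [spanLE, hset, Set.image_insert_eq, Submodule.mem_span_insert]
  refine ⟨fun ⟨c, z, hz, hx⟩ => ⟨c, by rwa [hx, add_sub_cancel_left]⟩, fun ⟨c, hx⟩ => ?_⟩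
  exact ⟨c, _, hx, (add_sub_cancel _ _).symm⟩

lemma mem_spanLE_of_sub_smul_mem {x : A} {a : Fin N → ℕ} {c : k}
    (h : x - c • mon u a ∈ spanLT k u a) : x ∈ spanLE k u a :=
  mem_spanLE_iff.2 ⟨c, h⟩

lemma eq_zero_or_mem_spanLE_of_mem_spanLT {x : A} {b : Fin N → ℕ} (hx : x ∈ spanLT k u b) :
    x = 0 ∨ ∃ a, weight a < weight b ∧ x ∈ spanLE k u a :=
  (Submodule.eq_zero_or_mem_span_image_le weight hx).imp_right fun ⟨a, ha, hxa⟩ => ⟨a, ha, hxa⟩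

lemma exists_mem_spanLE (hspan : Submodule.span k (Set.range (mon u)) = ⊤) (x : A) :
    ∃ a, x ∈ spanLE k u a := by
  have hx : x ∈ Submodule.span k (mon u '' Set.univ) := by simp [Set.image_univ, hspan]
  rcases Submodule.eq_zero_or_mem_span_image_le weight hx with rfl | ⟨a, -, ha⟩
  exacts [⟨0, zero_mem _⟩, ⟨a, ha⟩]

lemma span_range_wordProd (hgen : Algebra.adjoin k (Set.range u) = ⊤) :
    Submodule.span k (Set.range (wordProd u)) = ⊤ := by
  rw [← Algebra.toSubmodule_eq_top, Algebra.adjoin_eq_span, ← FreeMonoid.mrange_lift,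
    MonoidHom.coe_mrange] at hgen
  rw [← hgen, ← FreeMonoid.toList.surjective.range_comp]
  congr 2
  ext w
  simp [wordProd, FreeMonoid.lift_apply]

end Filtration

section Straightening

variable (k : Type*) {A : Type*} [CommRing k] [Ring A] [Algebra k A] (u : Fin N → A)

def lowerProductSpan (i : Fin N) : Submodule k A :=
  Submodule.span k {x | ∃ s t, s < i ∧ (x = u s * u t ∨ x = u t * u s)}

def SkewRelations : Prop :=
  ∀ i j, i < j → ∃ c : k, c ≠ 0 ∧ u j * u i - c • (u i * u j) ∈ lowerProductSpan k u i

variable {k u}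

lemma wordProd_mul_mem_spanLT {i j : Fin N} (hij : i < j) (l₁ l₂ : List (Fin N))
    (hlower : ∀ l, weight (wordExp l) < weight (wordExp (l₁ ++ j :: i :: l₂)) →
      wordProd u l ∈ spanLT k u (wordExp (l₁ ++ j :: i :: l₂)))
    {r : A} (hr : r ∈ lowerProductSpan k u i) :
    wordProd u l₁ * r * wordProd u l₂ ∈ spanLT k u (wordExp (l₁ ++ j :: i :: l₂)) := by
  refine (Submodule.span_le (p := (spanLT k u _).comap
    (LinearMap.mulLeftRight k (wordProd u l₁, wordProd u l₂)))).2 ?_ hr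
  rintro _ ⟨s, t, hsi, rfl | rfl⟩ <;>
    simp only [SetLike.mem_coe, Submodule.mem_comap, LinearMap.mulLeftRight_apply,
      ← wordProd_append_cons_cons]
  · exact hlower _ (weight_wordExp_lt hsi hij l₁ l₂)
  · refine hlower _ ?_
    rw [wordExp_perm (.append_left l₁ (.swap s t l₂))]
    exact weight_wordExp_lt hsi hij l₁ l₂

variable [IsDomain k]

theorem SkewRelations.straighten (hrel : SkewRelations k u) (l : List (Fin N)) :
    ∃ c : k, c ≠ 0 ∧ wordProd u l - c • mon u (wordExp l) ∈ spanLT k u (wordExp l) := by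
  induction l using (InvImage.wf (fun l => toLex (weight (wordExp l), suffixWeight l))
    wellFounded_lt).induction with
  | _ l ih =>
  by_cases hl : l.IsChain (· ≤ ·)
  · refine ⟨1, one_ne_zero, ?_⟩
    rw [one_smul, wordProd_eq_mon_of_isChain hl, sub_self]
    exact zero_mem _
  obtain ⟨l₁, j, i, l₂, hij, rfl⟩ := exists_eq_append_descent hl
  set a := wordExp (l₁ ++ j :: i :: l₂)
  have hexp : wordExp (l₁ ++ i :: j :: l₂) = a := wordExp_perm (.append_left l₁ (.swap j i l₂))
  obtain ⟨c, hc, hr⟩ := hrel i j hij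
  have hcorr : wordProd u l₁ * (u j * u i - c • (u i * u j)) * wordProd u l₂ ∈ spanLT k u a := by
    refine wordProd_mul_mem_spanLT hij l₁ l₂ (fun l hl => ?_) hr
    obtain ⟨_, _, h⟩ := ih l (Prod.Lex.toLex_lt_toLex.2 (.inl hl))
    exact spanLE_le_spanLT hl (mem_spanLE_of_sub_smul_mem h)
  obtain ⟨c', hc', h'⟩ := ih (l₁ ++ i :: j :: l₂)
    (Prod.Lex.toLex_lt_toLex.2 (.inr ⟨congrArg weight hexp, suffixWeight_swap_lt hij l₁ l₂⟩))
  rw [hexp] at h'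
  refine ⟨c * c', mul_ne_zero hc hc', ?_⟩
  have hsplit : wordProd u (l₁ ++ j :: i :: l₂) - (c * c') • mon u a =
      c • (wordProd u (l₁ ++ i :: j :: l₂) - c' • mon u a) +
        wordProd u l₁ * (u j * u i - c • (u i * u j)) * wordProd u l₂ := by
    simp only [wordProd_append_cons_cons, mul_sub, sub_mul, smul_sub, mul_smul_comm,
      smul_mul_assoc, mul_smul]
    abel
  rw [hsplit]
  exact add_mem (Submodule.smul_mem _ c h') hcorr

theorem SkewRelations.mon_mul_mon (hrel : SkewRelations k u) (a b : Fin N → ℕ) :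
    ∃ c : k, c ≠ 0 ∧ mon u a * mon u b - c • mon u (a + b) ∈ spanLT k u (a + b) := by
  have h := hrel.straighten (sortedWord a ++ sortedWord b)
  rwa [wordProd_append, wordExp_append, wordExp_sortedWord, wordExp_sortedWord] at h

theorem SkewRelations.mon_mul_mem_spanLT (hrel : SkewRelations k u) (a : Fin N → ℕ)
    {b : Fin N → ℕ} {x : A} (hx : x ∈ spanLT k u b) : mon u a * x ∈ spanLT k u (a + b) := by
  refine (Submodule.span_le (p := (spanLT k u (a + b)).comap (LinearMap.mulLeft k (mon u a)))).2
    ?_ hx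
  rintro _ ⟨c, hc : weight c < weight b, rfl⟩
  obtain ⟨_, _, h⟩ := hrel.mon_mul_mon a c
  refine spanLE_le_spanLT ?_ (mem_spanLE_of_sub_smul_mem h)
  rw [weight_add, weight_add]
  exact add_lt_add_right hc _

theorem SkewRelations.span_range_mon (hrel : SkewRelations k u)
    (hgen : Algebra.adjoin k (Set.range u) = ⊤) : Submodule.span k (Set.range (mon u)) = ⊤ := by
  rw [eq_top_iff, ← span_range_wordProd hgen, Submodule.span_le]
  rintro _ ⟨l, rfl⟩
  obtain ⟨_, _, h⟩ := hrel.straighten l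
  exact Submodule.span_mono (Set.image_subset_range _ _) (mem_spanLE_of_sub_smul_mem h)

end Straightening

section Noetherian

variable {k A : Type*} [Field k] [Ring A] [Algebra k A] {u : Fin N → A}

def SkewRelations.leadingIdeal (hrel : SkewRelations k u) (I : Submodule A A) :
    AddSemigroupIdeal (Fin N → ℕ) where
  carrier := {a | ∃ x ∈ I, ∃ c : k, c ≠ 0 ∧ x - c • mon u a ∈ spanLT k u a}
  vadd_mem' b a := by
    rintro ⟨x, hx, c, hc, hxa⟩
    obtain ⟨ν, hν, hmon⟩ := hrel.mon_mul_mon b a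
    refine ⟨mon u b * x, I.smul_mem _ hx, c * ν, mul_ne_zero hc hν, ?_⟩
    have hsplit : mon u b * x - (c * ν) • mon u (b + a) =
        mon u b * (x - c • mon u a) + c • (mon u b * mon u a - ν • mon u (b + a)) := by
      simp only [mul_sub, smul_sub, mul_smul_comm, mul_smul]
      abel
    rw [vadd_eq_add, hsplit]
    exact add_mem (hrel.mon_mul_mem_spanLT b hxa) (Submodule.smul_mem _ c hmon)

theorem SkewRelations.exists_mem_sub_smul_mem (hrel : SkewRelations k u) {I : Submodule A A}
    {a : Fin N → ℕ} (ha : a ∈ hrel.leadingIdeal I) (c : k) :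
    ∃ z ∈ I, z - c • mon u a ∈ spanLT k u a := by
  obtain ⟨y, hy, c', hc', h⟩ := ha
  refine ⟨(c / c') • y, I.smul_of_tower_mem _ hy, ?_⟩
  rw [show c • mon u a = (c / c') • c' • mon u a by rw [smul_smul, div_mul_cancel₀ _ hc'],
    ← smul_sub]
  exact Submodule.smul_mem _ _ h

theorem SkewRelations.le_of_leadingIdeal_le (hrel : SkewRelations k u)
    (hspan : Submodule.span k (Set.range (mon u)) = ⊤) {I I' : Submodule A A} (hle : I ≤ I')
    (hlead : hrel.leadingIdeal I' ≤ hrel.leadingIdeal I) : I' ≤ I := by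
  intro x hx
  obtain ⟨a, ha⟩ := exists_mem_spanLE hspan x
  induction a using (InvImage.wf weight wellFounded_lt).induction generalizing x with
  | _ a ih =>
  have hlow : ∀ y ∈ I', y ∈ spanLT k u a → y ∈ I := fun y hy hya => by
    rcases eq_zero_or_mem_spanLE_of_mem_spanLT hya with rfl | ⟨b, hb, hyb⟩
    exacts [zero_mem _, ih b hb hy hyb]
  obtain ⟨c, hxc⟩ := mem_spanLE_iff.1 ha
  obtain ⟨z, hzI, hz⟩ : ∃ z ∈ I, z - c • mon u a ∈ spanLT k u a := by
    by_cases hc : c = 0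
    · exact ⟨0, zero_mem _, by simp [hc]⟩
    · exact hrel.exists_mem_sub_smul_mem (hlead ⟨x, hx, c, hc, hxc⟩) c
  have hxz : x - z ∈ I := hlow _ (sub_mem hx (hle hzI)) (by simpa using sub_mem hxc hz)
  simpa using add_mem hxz hzI

theorem SkewRelations.isNoetherianRing (hrel : SkewRelations k u)
    (hgen : Algebra.adjoin k (Set.range u) = ⊤) : IsNoetherianRing A := by
  have hmono : StrictMono hrel.leadingIdeal := fun I I' hlt =>
    lt_of_le_not_ge (fun a ⟨x, hx, hxa⟩ => ⟨x, hlt.le hx, hxa⟩) fun h =>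
      hlt.not_ge (hrel.le_of_leadingIdeal_le (hrel.span_range_mon hgen) hlt.le h)
  exact isNoetherianRing_iff.2 (isNoetherian_iff'.2 hmono.wellFoundedGT)

end Noetherian

open MulOpposite in
theorem SkewRelations.mulOpposite {k A : Type*} [Field k] [Ring A] [Algebra k A] {u : Fin N → A}
    (hrel : SkewRelations k u) : SkewRelations k fun i => op (u i) := by
  intro i j hij
  obtain ⟨c, hc, hr⟩ := hrel i j hij
  have hmap : lowerProductSpan k u i ≤
      (lowerProductSpan k (fun i => op (u i)) i).comap (opLinearEquiv k).toLinearMap := by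
    refine Submodule.span_le.2 ?_
    rintro _ ⟨s, t, hsi, rfl | rfl⟩
    · exact Submodule.subset_span ⟨s, t, hsi, .inr rfl⟩
    · exact Submodule.subset_span ⟨s, t, hsi, .inl rfl⟩
  refine ⟨c⁻¹, inv_ne_zero hc, ?_⟩
  have hop : op (u j) * op (u i) - c⁻¹ • (op (u i) * op (u j)) =
      -c⁻¹ • op (u j * u i - c • (u i * u j)) := by
    simp only [op_sub, op_smul, op_mul, smul_sub, smul_smul, neg_mul, inv_mul_cancel₀ hc,
      neg_smul, one_smul]
    abel
  rw [hop]
  exact Submodule.smul_mem _ _ (hmap hr)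

end SkewPBW

/-- Brown–Goodearl criterion.  Let `A` be an associative `k`-algebra
generated by `u 0, …, u (N-1)` such that for all `i < j`,
`u j * u i = q i j • (u i * u j) + Σ_{s < i} Σ_t (α i j s t • (u s * u t) + β i j s t • (u t * u s))`
with `q i j ≠ 0`.  Then `A` is left and right Noetherian. -/
theorem noetherian_of_skew_commutation_relations
    (k A : Type*) [Field k] [Ring A] [Algebra k A] (N : ℕ) (u : Fin N → A)
    (hgen : Algebra.adjoin k (Set.range u) = ⊤)
    (q : Fin N → Fin N → k) (hq : ∀ i j, q i j ≠ 0)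
    (α β : Fin N → Fin N → Fin N → Fin N → k)
    (hrel : ∀ i j : Fin N, i < j →
      u j * u i = q i j • (u i * u j) +
        ∑ s : Fin N, ∑ t : Fin N,
          if s < i then α i j s t • (u s * u t) + β i j s t • (u t * u s) else 0) :
    IsNoetherianRing A ∧ IsNoetherianRing Aᵐᵒᵖ := by
  have hskew : SkewPBW.SkewRelations k u := fun i j hij => by
    refine ⟨q i j, hq i j, ?_⟩
    rw [hrel i j hij, add_sub_cancel_left]
    refine Submodule.sum_mem _ fun s _ => Submodule.sum_mem _ fun t _ => ?_
    split_ifs with hsi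
    · exact add_mem (Submodule.smul_mem _ _ (Submodule.subset_span ⟨s, t, hsi, .inl rfl⟩))
        (Submodule.smul_mem _ _ (Submodule.subset_span ⟨s, t, hsi, .inr rfl⟩))
    · exact zero_mem _
  exact ⟨hskew.isNoetherianRing hgen,
    hskew.mulOpposite.isNoetherianRing (Algebra.adjoin_range_op_eq_top hgen)⟩
end
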